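/- arXiv:2011.11628 — 4 statements merged into one kernel-verified Lean document; each statement's English description precedes it below -/
import Mathlib

section
/- Let Λ: {F_1,…,F_m} → ℤ₂^r be a vector-colouring of a simple n-polytope P, and suppose Λ_{j_1},…,Λ_{j_r} form a basis of ℤ₂^r. Then the manifold M(P,Λ) is orientable if and only if every Λ_i is a linear combination of an odd number of the basis vectors Λ_{j_1},…,Λ_{j_r}. -/
/-! Let `φ` be the sum of the coordinates in the basis `B`: a linear functional with
`φ (B s) = 1`. A parity `o` that flips under translation by every basis vector satisfies
`o (a + x) = o a + φ x` for all `x`, by induction over the span; so the flip condition for `Λ i`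
forces `φ (Λ i) = 1`. Conversely, if `φ (Λ i) = 1` for all `i`, then `o := φ` works. -/

namespace Module.Basis

variable {κ V : Type*} [Fintype κ] [AddCommGroup V]

section CommSemiring

variable {R : Type*} [CommSemiring R] [Module R V]

noncomputable def coordSum (B : Basis κ R V) : V →ₗ[R] R :=
  ∑ s, B.coord s

@[simp]
theorem coordSum_apply (B : Basis κ R V) (x : V) :
    B.coordSum x = ∑ s, B.repr x s := by
  simp [coordSum]

theorem coordSum_self (B : Basis κ R V) (s : κ) :
    B.coordSum (B s) = 1 := by
  classical
  simp [Finsupp.single_apply]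

end CommSemiring

variable [Module (ZMod 2) V]

theorem map_add_eq_add_coordSum (B : Basis κ (ZMod 2) V) {o : V → ZMod 2}
    (ho : ∀ a s, o (a + B s) = o a + 1) (a x : V) : o (a + x) = o a + B.coordSum x := by
  induction (B.mem_span x) using Submodule.span_induction generalizing a with
  | mem _ hy =>
    obtain ⟨s, rfl⟩ := hy
    rw [ho, coordSum_self]
  | zero => simp
  | add y z _ _ hy hz => rw [← add_assoc, hz, hy, map_add, add_assoc]
  | smul c y _ hy =>
    obtain rfl | rfl : c = 0 ∨ c = 1 := by decide +revert
    · simp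
    · simpa using hy a

theorem exists_flip_iff_coordSum_eq_one {ι : Type*} (B : Basis κ (ZMod 2) V) (v : ι → V)
    (j : κ → ι) (hB : ∀ s, B s = v (j s)) :
    (∃ o : V → ZMod 2, ∀ a i, o (a + v i) = o a + 1) ↔ ∀ i, B.coordSum (v i) = 1 := by
  constructor
  · rintro ⟨o, ho⟩ i
    have hflip := B.map_add_eq_add_coordSum (fun a s => hB s ▸ ho a (j s)) 0 (v i)
    rw [ho] at hflip
    exact (add_left_cancel hflip).symm
  · intro h
    exact ⟨B.coordSum, fun a i => by rw [map_add, h]⟩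

end Module.Basis

theorem stmt_1_general (m r : ℕ)
    (Λ : Fin m → (Fin r → ZMod 2))
    (j : Fin r → Fin m)
    (B : Module.Basis (Fin r) (ZMod 2) (Fin r → ZMod 2)) (hB : ∀ s, B s = Λ (j s)) :
    (∃ o : (Fin r → ZMod 2) → ZMod 2, ∀ a i, o (a + Λ i) = o a + 1) ↔
      ∀ i, (∑ s, B.repr (Λ i) s) = 1 := by
  simpa only [Module.Basis.coordSum_apply] using B.exists_flip_iff_coordSum_eq_one Λ j hB

/-- Let `Λ : {F_1,…,F_m} → ℤ₂^r` be a vector-colouring of a simple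
`n`-polytope `P` (condition (*): for each vertex, given by the set of the `n` facets
containing it, the corresponding vectors are linearly independent), and suppose
`Λ_{j 1}, …, Λ_{j r}` form a basis `B` of `ℤ₂^r`.  The manifold `M(P,Λ)` is orientable
iff one can choose orientations (a parity function `o` on the `2^r` copies of `P`) so that
copies glued along a facet carry opposite orientations, i.e. `o (a + Λ i) = o a + 1`.
Theorem: `M(P,Λ)` is orientable iff every `Λ i` is a linear combination of an odd number
of the basis vectors, i.e. the sum of the coordinates of `Λ i` in the basis `B` is `1`. -/
theorem stmt_1 (m n r : ℕ) (hr : 0 < r)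
    (IsVertex : Finset (Fin m) → Prop)
    (Λ : Fin m → (Fin r → ZMod 2))
    (hspan : Submodule.span (ZMod 2) (Set.range Λ) = ⊤)
    (hstar : ∀ S : Finset (Fin m), IsVertex S → S.card = n →
      LinearIndependent (ZMod 2) (fun i : S => Λ i))
    (j : Fin r → Fin m)
    (B : Module.Basis (Fin r) (ZMod 2) (Fin r → ZMod 2)) (hB : ∀ s, B s = Λ (j s)) :
    (∃ o : (Fin r → ZMod 2) → ZMod 2, ∀ a i, o (a + Λ i) = o a + 1) ↔
      ∀ i, (∑ s, B.repr (Λ i) s) = 1 :=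
  stmt_1_general m r Λ j B hB
end

section
/- Let Λ: {F_1,…,F_m} → ℤ₂^r be a vector-colouring with Λ_{j_1},…,Λ_{j_r} a basis, and suppose every Λ_k written in this basis has some parity of the number of nonzero coordinates. Define Λ̂: {F_1,…,F_m} → ℤ₂^{r+1} by Λ̂_k = Λ_k if Λ_k has an odd number of nonzero coordinates, and Λ̂_k = Λ_k + (e_{r+1} + Λ_{i_0}) if Λ_k has an even number of nonzero coordinates, where Λ_{i_0} is a fixed vector with an even number of nonzero coordinates. Then Λ̂ satisfies the vector-colouring condition (*): for any vertex F_{i_1}∩⋯∩F_{i_n}, the vectors Λ̂_{i_1},…,Λ̂_{i_n} are linearly independent. -/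
/-!
The linear map `ℤ₂^{r+1} → ℤ₂^r` that fixes `ℤ₂^r` and sends `e_{r+1}` to `Λ_{i₀}` sends
`Λ̂_k` back to `Λ_k` for every `k`, since `Λ_{i₀} + Λ_{i₀} = 0`. A family whose image under a
linear map is linearly independent is itself linearly independent, so (*) for `Λ` gives (*)
for `Λ̂`.
-/

section CollapseLast

variable {R : Type*} [CommSemiring R] {r : ℕ}

def collapseLast (w : Fin r → R) : (Fin (r + 1) → R) →ₗ[R] (Fin r → R) :=
  LinearMap.funLeft R R Fin.castSucc + (LinearMap.proj (Fin.last r)).smulRight w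

theorem collapseLast_apply (w : Fin r → R) (v : Fin (r + 1) → R) :
    collapseLast w v = v ∘ Fin.castSucc + v (Fin.last r) • w :=
  rfl

@[simp]
theorem collapseLast_snoc_zero (w x : Fin r → R) : collapseLast w (Fin.snoc x 0) = x := by
  simp [collapseLast_apply, Function.comp_def]

@[simp]
theorem collapseLast_single_last (w : Fin r → R) :
    collapseLast w (Pi.single (Fin.last r) 1) = w := by
  ext s
  simp [collapseLast_apply]

theorem collapseLast_snoc_add_single_add_snoc [CharP R 2] (w x : Fin r → R) :
    collapseLast w (Fin.snoc x 0 + (Pi.single (Fin.last r) 1 + Fin.snoc w 0)) = x := by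
  ext s
  simp [CharTwo.add_self_eq_zero]

end CollapseLast

theorem stmt_4_general (m n r : ℕ)
    (IsVertex : Finset (Fin m) → Prop)
    (Λ : Fin m → (Fin r → ZMod 2))
    (hstar : ∀ S : Finset (Fin m), IsVertex S → S.card = n →
      LinearIndependent (ZMod 2) (fun i : S => Λ i))
    (B : Module.Basis (Fin r) (ZMod 2) (Fin r → ZMod 2))
    (i₀ : Fin m)
    (Λhat : Fin m → (Fin (r + 1) → ZMod 2))
    (hΛhat : ∀ k, Λhat k =
      if (∑ s, B.repr (Λ k) s) = 1 then Fin.snoc (Λ k) 0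
      else Fin.snoc (Λ k) 0 + (Pi.single (Fin.last r) 1 + Fin.snoc (Λ i₀) 0)) :
    ∀ S : Finset (Fin m), IsVertex S → S.card = n →
      LinearIndependent (ZMod 2) (fun i : S => Λhat i) := by
  have hlift : ∀ k, collapseLast (Λ i₀) (Λhat k) = Λ k := by
    intro k
    rw [hΛhat k]
    split_ifs
    · exact collapseLast_snoc_zero _ _
    · exact collapseLast_snoc_add_single_add_snoc _ _
  intro S hS hcard
  refine LinearIndependent.of_comp (collapseLast (Λ i₀)) ?_
  simpa only [Function.comp_def, hlift] using hstar S hS hcard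

/-- Let `Λ : {F_1,…,F_m} → ℤ₂^r` satisfy the vector-colouring condition (*)
(at each vertex of the simple `n`-polytope the vectors of the `n` facets containing it are
linearly independent), with `Λ_{j 1}, …, Λ_{j r}` a basis `B`.  Embed `ℤ₂^r ⊂ ℤ₂^{r+1}`
(last coordinate zero, via `Fin.snoc · 0`), let `e_{r+1} = Pi.single (Fin.last r) 1`, and
fix `i₀` with an even number of nonzero coordinates in the basis `B` (coordinate sum `0`
in `ℤ₂`).  Define `Λ̂ k = Λ k` if `Λ k` has an odd number of nonzero coordinates
(coordinate sum `1`) and `Λ̂ k = Λ k + (e_{r+1} + Λ i₀)` otherwise.  Then `Λ̂` again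
satisfies condition (*): for each vertex the vectors `Λ̂` of its facets are linearly
independent in `ℤ₂^{r+1}`. -/
theorem stmt_4 (m n r : ℕ) (hr : 0 < r)
    (IsVertex : Finset (Fin m) → Prop)
    (Λ : Fin m → (Fin r → ZMod 2))
    (hstar : ∀ S : Finset (Fin m), IsVertex S → S.card = n →
      LinearIndependent (ZMod 2) (fun i : S => Λ i))
    (j : Fin r → Fin m)
    (B : Module.Basis (Fin r) (ZMod 2) (Fin r → ZMod 2)) (hB : ∀ s, B s = Λ (j s))
    (i₀ : Fin m) (hi₀ : (∑ s, B.repr (Λ i₀) s) = 0)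
    (Λhat : Fin m → (Fin (r + 1) → ZMod 2))
    (hΛhat : ∀ k, Λhat k =
      if (∑ s, B.repr (Λ k) s) = 1 then Fin.snoc (Λ k) 0
      else Fin.snoc (Λ k) 0 + (Pi.single (Fin.last r) 1 + Fin.snoc (Λ i₀) 0)) :
    ∀ S : Finset (Fin m), IsVertex S → S.card = n →
      LinearIndependent (ZMod 2) (fun i : S => Λhat i) :=
  stmt_4_general m n r IsVertex Λ hstar B i₀ Λhat hΛhat
end

section
/- In the setting of the orientable double cover construction: in the basis Λ_{j_1},…,Λ_{j_r}, e_{r+1} of ℤ₂^{r+1}, every vector Λ̂_i has an odd number of nonzero coordinates. Hence the manifold M(P, Λ̂) is orientable. -/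
/-!
Coordinate sums in the bases `B` and `B'` are linear functionals, and the embedding
`v ↦ Fin.snoc v 0` carries `B` to the first `r` vectors of `B'`, so it preserves coordinate
sums. Hence `Λ̂ k` has coordinate sum `1` when `Λ k` is odd, and `0 + (1 + 0) = 1` otherwise,
since `e_{r+1}` is a basis vector of `B'` and `Λ i₀` is even. The coordinate sum in `B'` is then
itself the orientation parity.
-/

open Module

namespace Module.Basis

variable {ι ι' R M M' : Type*} [CommSemiring R] [AddCommMonoid M] [Module R M]
  [AddCommMonoid M'] [Module R M']

theorem sumCoords_eq_sum_repr [Fintype ι] (b : Basis ι R M) (x : M) :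
    b.sumCoords x = ∑ i, b.repr x i := by
  simp [sumCoords, Finsupp.sum_fintype]

theorem sumCoords_comp_of_apply_eq (b : Basis ι R M) (b' : Basis ι' R M') (f : M →ₗ[R] M')
    (e : ι → ι') (hf : ∀ i, f (b i) = b' (e i)) : b'.sumCoords ∘ₗ f = b.sumCoords :=
  b.ext fun i => by simp [hf, sumCoords_self_apply]

end Module.Basis

def Fin.snocZeroLinearMap (R : Type*) [Semiring R] (n : ℕ) :
    (Fin n → R) →ₗ[R] (Fin (n + 1) → R) where
  toFun v := Fin.snoc v 0
  map_add' v w := by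
    funext i
    refine Fin.lastCases ?_ (fun i => ?_) i <;> simp
  map_smul' c v := by
    funext i
    refine Fin.lastCases ?_ (fun i => ?_) i <;> simp

theorem stmt_5_general (m r : ℕ)
    (Λ : Fin m → (Fin r → ZMod 2))
    (j : Fin r → Fin m)
    (B : Module.Basis (Fin r) (ZMod 2) (Fin r → ZMod 2)) (hB : ∀ s, B s = Λ (j s))
    (i₀ : Fin m) (hi₀ : (∑ s, B.repr (Λ i₀) s) = 0)
    (Λhat : Fin m → (Fin (r + 1) → ZMod 2))
    (hΛhat : ∀ k, Λhat k =
      if (∑ s, B.repr (Λ k) s) = 1 then Fin.snoc (Λ k) 0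
      else Fin.snoc (Λ k) 0 + (Pi.single (Fin.last r) 1 + Fin.snoc (Λ i₀) 0))
    (B' : Module.Basis (Fin (r + 1)) (ZMod 2) (Fin (r + 1) → ZMod 2))
    (hB' : ∀ s : Fin r, B' s.castSucc = Fin.snoc (Λ (j s)) 0)
    (hB'last : B' (Fin.last r) = Pi.single (Fin.last r) 1) :
    (∀ i, (∑ t, B'.repr (Λhat i) t) = 1) ∧
    (∃ o : (Fin (r + 1) → ZMod 2) → ZMod 2, ∀ a i, o (a + Λhat i) = o a + 1) := by
  simp only [← Basis.sumCoords_eq_sum_repr] at hi₀ hΛhat ⊢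
  have hsnoc (v : Fin r → ZMod 2) : B'.sumCoords (Fin.snoc v 0) = B.sumCoords v :=
    LinearMap.congr_fun (B.sumCoords_comp_of_apply_eq B' (Fin.snocZeroLinearMap (ZMod 2) r)
      Fin.castSucc fun s => by simp [Fin.snocZeroLinearMap, hB, hB']) v
  have hlast : B'.sumCoords (Pi.single (Fin.last r) 1) = 1 := by
    rw [← hB'last, Basis.sumCoords_self_apply]
  have hodd (i : Fin m) : B'.sumCoords (Λhat i) = 1 := by
    rw [hΛhat i]
    split_ifs with heven
    · rwa [hsnoc]
    · have hflip : ∀ x : ZMod 2, x ≠ 1 → x + 1 = 1 := by decide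
      rw [map_add, map_add, hsnoc, hsnoc, hlast, hi₀, add_zero, hflip _ heven]
  exact ⟨hodd, B'.sumCoords, fun a i => by rw [map_add, hodd]⟩

/-- In the orientable double cover construction: `Λ` is a vector-colouring
with basis `B = (Λ_{j 1}, …, Λ_{j r})` of `ℤ₂^r`, `Λ i₀` has an even number of nonzero
coordinates in `B` (coordinate sum `0` in `ℤ₂`), and
`Λ̂ k = Λ k` (embedded in `ℤ₂^{r+1}` via `Fin.snoc · 0`) if `Λ k` has an odd number of
nonzero coordinates, and `Λ̂ k = Λ k + (e_{r+1} + Λ i₀)` otherwise.  Let `B'` be the basis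
`Λ_{j 1}, …, Λ_{j r}, e_{r+1}` of `ℤ₂^{r+1}`.  Then every `Λ̂ i` has an odd number of
nonzero coordinates in the basis `B'` (coordinate sum `1`), and hence `M(P, Λ̂)` is
orientable: there is an orientation parity `o` with `o (a + Λ̂ i) = o a + 1`. -/
theorem stmt_5 (m r : ℕ) (hr : 0 < r)
    (Λ : Fin m → (Fin r → ZMod 2))
    (j : Fin r → Fin m)
    (B : Module.Basis (Fin r) (ZMod 2) (Fin r → ZMod 2)) (hB : ∀ s, B s = Λ (j s))
    (i₀ : Fin m) (hi₀ : (∑ s, B.repr (Λ i₀) s) = 0)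
    (Λhat : Fin m → (Fin (r + 1) → ZMod 2))
    (hΛhat : ∀ k, Λhat k =
      if (∑ s, B.repr (Λ k) s) = 1 then Fin.snoc (Λ k) 0
      else Fin.snoc (Λ k) 0 + (Pi.single (Fin.last r) 1 + Fin.snoc (Λ i₀) 0))
    (B' : Module.Basis (Fin (r + 1)) (ZMod 2) (Fin (r + 1) → ZMod 2))
    (hB' : ∀ s : Fin r, B' s.castSucc = Fin.snoc (Λ (j s)) 0)
    (hB'last : B' (Fin.last r) = Pi.single (Fin.last r) 1) :
    (∀ i, (∑ t, B'.repr (Λhat i) t) = 1) ∧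
    (∃ o : (Fin (r + 1) → ZMod 2) → ZMod 2, ∀ a i, o (a + Λhat i) = o a + 1) :=
  stmt_5_general m r Λ j B hB i₀ hi₀ Λhat hΛhat B' hB' hB'last
end

section
/- Let P be a connected sum of simple 3-polytopes P₁ and P₂ along vertices, and let M(P,Λ) be orientable, where Λ is a vector-colouring of rank r. Let B = (F_i, F_j, F_k) be the arising 3-belt. Then the vectors Λ_i, Λ_j, Λ_k are linearly independent in ℤ₂^r. -/
/-- A (combinatorial) simple 3-polytope, recorded by its set of facets `F_0, …, F_{m-1}`
and the predicate `Meets S` saying that the facets in `S` have a nonempty common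
intersection.  In a simple 3-polytope at most 3 facets can meet. -/
structure CombPolytope3 where
  m : ℕ
  Meets : Finset (Fin m) → Prop
  meets_mono : ∀ ⦃s t : Finset (Fin m)⦄, s ⊆ t → Meets t → Meets s
  meets_single : ∀ i, Meets {i}
  meets_card_le : ∀ s, Meets s → s.card ≤ 3

/-- A `(k+3)`-belt: a cyclic sequence of facets, adjacent iff consecutive, no three of
which share a vertex. -/
def CombPolytope3.IsBelt (P : CombPolytope3) {k : ℕ} (b : Fin (k + 3) → Fin P.m) : Prop :=
  Function.Injective b ∧
  (∀ i j : Fin (k + 3), i ≠ j → (P.Meets {b i, b j} ↔ (j = i + 1 ∨ i = j + 1))) ∧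
  (∀ i j l : Fin (k + 3), i ≠ j → j ≠ l → i ≠ l → ¬ P.Meets {b i, b j, b l})

/-- A 3-belt: three pairwise adjacent facets with no common vertex. -/
def CombPolytope3.Is3Belt (P : CombPolytope3) (i j l : Fin P.m) : Prop :=
  i ≠ j ∧ j ≠ l ∧ i ≠ l ∧ P.Meets {i, j} ∧ P.Meets {j, l} ∧ P.Meets {i, l} ∧
    ¬ P.Meets {i, j, l}

/-- Combinatorial equivalence of simple 3-polytopes. -/
def CombPolytope3.Equiv (P Q : CombPolytope3) : Prop :=
  ∃ e : Fin P.m ≃ Fin Q.m, ∀ S : Finset (Fin P.m), P.Meets S ↔ Q.Meets (S.image e)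

/-- `P` is the 3-simplex: four facets, any three of which meet. -/
def CombPolytope3.IsSimplex (P : CombPolytope3) : Prop :=
  P.m = 4 ∧ ∀ S : Finset (Fin P.m), S.card ≤ 3 → P.Meets S

/-- `P` is flag: equivalently (for simple 3-polytopes), `P` is not the simplex and has no
3-belt. -/
def CombPolytope3.IsFlag (P : CombPolytope3) : Prop :=
  ¬ P.IsSimplex ∧ ∀ i j l, ¬ P.Is3Belt i j l

/-- `P` is the connected sum of `P₁` and `P₂` along vertices `v₁ ∈ P₁`, `v₂ ∈ P₂`: the
facets of `P` are the facets of `P₁` and of `P₂` with the three facets around `v₁` glued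
to the three facets around `v₂` (forming a 3-belt of `P` with no common vertex), and all
other incidences inherited. -/
structure CombPolytope3.VertexConnSum (P P₁ P₂ : CombPolytope3) where
  v₁ : Finset (Fin P₁.m)
  v₂ : Finset (Fin P₂.m)
  hv₁ : P₁.Meets v₁ ∧ v₁.card = 3
  hv₂ : P₂.Meets v₂ ∧ v₂.card = 3
  φ₁ : Fin P₁.m → Fin P.m
  φ₂ : Fin P₂.m → Fin P.m
  inj₁ : Function.Injective φ₁
  inj₂ : Function.Injective φ₂
  cover : ∀ f : Fin P.m, (∃ i, φ₁ i = f) ∨ (∃ j, φ₂ j = f)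
  overlap : ∀ f : Fin P.m, (∃ i, φ₁ i = f) → (∃ j, φ₂ j = f) → ∃ i ∈ v₁, φ₁ i = f
  glue : ∀ i ∈ v₁, ∃ j ∈ v₂, φ₁ i = φ₂ j
  meets₁ : ∀ S : Finset (Fin P₁.m), S ≠ v₁ → (P.Meets (S.image φ₁) ↔ P₁.Meets S)
  meets₂ : ∀ S : Finset (Fin P₂.m), S ≠ v₂ → (P.Meets (S.image φ₂) ↔ P₂.Meets S)
  belt_no_vertex : ¬ P.Meets (v₁.image φ₁)
  sides : ∀ T : Finset (Fin P.m), P.Meets T →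
    (∀ f ∈ T, ∃ i, φ₁ i = f) ∨ (∀ f ∈ T, ∃ j, φ₂ j = f)

lemma zmod2_cases : ∀ x : ZMod 2, x = 0 ∨ x = 1 := by decide

lemma zmod2_fun_add_eq_zero {r : ℕ} {u v : Fin r → ZMod 2} (h : u + v = 0) : u = v := by
  funext i
  have h' : u i + v i = 0 := congrFun h i
  rcases zmod2_cases (u i) with h1 | h1 <;> rcases zmod2_cases (v i) with h2 | h2 <;>
    rw [h1, h2] at h' ⊢ <;> first | rfl | simpa using h'

lemma li3' {r : ℕ} (f : Fin 3 → (Fin r → ZMod 2)) (h1 : ∀ i, f i ≠ 0)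
    (h2 : ∀ i j, i ≠ j → f i + f j ≠ 0) (h3 : f 0 + f 1 + f 2 ≠ 0) :
    LinearIndependent (ZMod 2) f := by
  rw [Fintype.linearIndependent_iff]
  intro g hg
  rw [Fin.sum_univ_three] at hg
  rcases zmod2_cases (g 0) with h0 | h0 <;> rcases zmod2_cases (g 1) with hb | hb <;>
    rcases zmod2_cases (g 2) with hc | hc <;>
    rw [h0, hb, hc] at hg <;> simp only [one_smul, zero_smul, zero_add, add_zero] at hg <;>
    first
    | (intro i; fin_cases i <;> assumption)
    | exact absurd hg (h1 _)
    | exact absurd hg (h2 0 1 (by decide))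
    | exact absurd hg (h2 0 2 (by decide))
    | exact absurd hg (h2 1 2 (by decide))
    | exact absurd hg h3


/-- Let `P` be a connected sum of simple 3-polytopes `P₁` and `P₂` along
vertices, with arising 3-belt consisting of the facets `φ₁ '' v₁`, and let `Λ` be a
vector-colouring of rank `r` of `P` (condition (*): the vectors of any set of facets with
nonempty common intersection are linearly independent) such that `M(P,Λ)` is orientable
(there is an orientation parity `o` with `o (a + Λ i) = o a + 1`).  Then the three vectors
of the belt facets are linearly independent in `ℤ₂^r`. -/
theorem stmt_11 (P P₁ P₂ : CombPolytope3) (cs : CombPolytope3.VertexConnSum P P₁ P₂)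
    (r : ℕ) (Λ : Fin P.m → (Fin r → ZMod 2))
    (hstar : ∀ S : Finset (Fin P.m), P.Meets S →
      LinearIndependent (ZMod 2) (fun i : S => Λ i))
    (horient : ∃ o : (Fin r → ZMod 2) → ZMod 2, ∀ a i, o (a + Λ i) = o a + 1) :
    LinearIndependent (ZMod 2) (fun f : (cs.v₁.image cs.φ₁ : Finset (Fin P.m)) => Λ f) := by
  have hcard : (cs.v₁.image cs.φ₁).card = 3 := by
    rw [Finset.card_image_of_injective _ cs.inj₁, cs.hv₁.2]
  -- any two distinct facets of the belt meet
  have hpair : ∀ x ∈ cs.v₁.image cs.φ₁, ∀ y ∈ cs.v₁.image cs.φ₁, x ≠ y → P.Meets {x, y} := by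
    intro x hx y hy hxy
    obtain ⟨i, hi, rfl⟩ := Finset.mem_image.mp hx
    obtain ⟨j, hj, rfl⟩ := Finset.mem_image.mp hy
    have hij : i ≠ j := fun h => hxy (congrArg _ h)
    have hsub : ({i, j} : Finset (Fin P₁.m)) ⊆ cs.v₁ := by
      intro z hz; simp at hz; rcases hz with h | h <;> subst h <;> assumption
    have hne : ({i, j} : Finset (Fin P₁.m)) ≠ cs.v₁ := by
      intro h
      have hle : ({i, j} : Finset (Fin P₁.m)).card ≤ 2 :=
        (Finset.card_insert_le _ _).trans (by simp)
      rw [h, cs.hv₁.2] at hle; omega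
    have hm : P₁.Meets {i, j} := P₁.meets_mono hsub cs.hv₁.1
    have := (cs.meets₁ {i, j} hne).mpr hm
    simpa [Finset.image_insert] using this
  -- each colour is nonzero
  have hsingle : ∀ f : Fin P.m, Λ f ≠ 0 := by
    intro f
    have h := hstar {f} (P.meets_single f)
    exact h.ne_zero ⟨f, by simp⟩
  -- colours of two distinct meeting facets have nonzero sum
  have hpairne : ∀ x y : Fin P.m, x ≠ y → P.Meets {x, y} → Λ x + Λ y ≠ 0 := by
    intro x y hxy hm h
    have heq : Λ x = Λ y := zmod2_fun_add_eq_zero h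
    have hli := hstar {x, y} hm
    have h2 := hli.injective (a₁ := ⟨x, by simp⟩) (a₂ := ⟨y, by simp⟩) heq
    exact hxy (congrArg Subtype.val h2)
  -- orientability: the sum of any three colours is nonzero
  obtain ⟨o, ho⟩ := horient
  have htriple : ∀ x y z : Fin P.m, Λ x + Λ y + Λ z ≠ 0 := by
    intro x y z h
    have h1 : o (0 + Λ x + Λ y + Λ z) = o 0 + 1 + 1 + 1 := by rw [ho, ho, ho]
    have h2 : (0 : Fin r → ZMod 2) + Λ x + Λ y + Λ z = 0 := by rw [zero_add]; exact h
    rw [h2] at h1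
    have h4 : (0 : ZMod 2) = 1 + (1 + (1 + 0)) := by
      apply add_left_cancel (a := o 0)
      rw [add_zero]
      calc o 0 = o 0 + 1 + 1 + 1 := h1
        _ = o 0 + (1 + (1 + (1 + 0))) := by ring
    exact absurd h4 (by decide)
  -- reindex via an equivalence with Fin 3
  set T := cs.v₁.image cs.φ₁ with hT
  let E := T.orderIsoOfFin hcard
  have key : LinearIndependent (ZMod 2) ((fun f : T => Λ f) ∘ E) := by
    apply li3'
    · intro i; exact hsingle _
    · intro i j hij
      have hne : ((E i : T) : Fin P.m) ≠ ((E j : T) : Fin P.m) := by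
        intro h
        exact hij (E.injective (Subtype.ext h))
      exact hpairne _ _ hne (hpair _ (E i).2 _ (E j).2 hne)
    · exact htriple _ _ _
  exact (linearIndependent_equiv E.toEquiv).mp key
end
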